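/- For every C¹ function f : U → ℍ on an open set U ⊆ ℍ and every x ∈ U: D₁q ∧ df(x) = −df(x) ∧ D₁q = −[∂f/∂x₁(x) + ∂f/∂x₂(x) + ∂f/∂x₃(x) + ∂f/∂x₄(x)]·v, where v = dx¹∧dx²∧dx³∧dx⁴ is the volume form. -/

import Mathlib

open scoped Quaternion

noncomputable section

/-- The standard basis `e₁ = 1, e₂ = i, e₃ = j, e₄ = k` of the quaternions. -/
def e : Fin 4 → ℍ[ℝ] := ![1, ⟨0,1,0,0⟩, ⟨0,0,1,0⟩, ⟨0,0,0,1⟩]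

/-- The real coordinates of a quaternion. -/
def toTuple (x : ℍ[ℝ]) : Fin 4 → ℝ := ![x.re, x.imI, x.imJ, x.imK]

/-- The coordinate functional `dxⁱ : ℍ → ℝ`. -/
def coord (i : Fin 4) : ℍ[ℝ] →ₗ[ℝ] ℝ :=
  (LinearMap.proj i).comp (QuaternionAlgebra.linearEquivTuple (-1 : ℝ) (0 : ℝ) (-1 : ℝ)).toLinearMap

/-- A quaternion-valued `m`-form (at a point). -/
abbrev QForm (m : ℕ) := AlternatingMap ℝ ℍ[ℝ] ℍ[ℝ] (Fin m)

/-- The wedge product of quaternion-valued forms, via `AlternatingMap.domCoprod`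
composed with quaternion multiplication and reindexed along `Fin m ⊕ Fin n ≃ Fin (m+n)`. -/
def wedge {m n : ℕ} (α : QForm m) (β : QForm n) : QForm (m + n) :=
  ((LinearMap.mul' ℝ ℍ[ℝ]).compAlternatingMap (α.domCoprod β)).domDomCongr finSumFinEquiv

/-- Left multiplication of a quaternion-valued form by a quaternion. -/
def qsmul (q : ℍ[ℝ]) {m : ℕ} (γ : QForm m) : QForm m :=
  (LinearMap.mulLeft ℝ q).compAlternatingMap γ

/-- Right multiplication of a quaternion-valued form by a quaternion. -/
def qsmulR (q : ℍ[ℝ]) {m : ℕ} (γ : QForm m) : QForm m :=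
  (LinearMap.mulRight ℝ q).compAlternatingMap γ

/-- The quaternion-valued 1-form `dxⁱ` (real-valued, regarded as ℍ-valued). -/
def dx (i : Fin 4) : QForm 1 :=
  AlternatingMap.ofSubsingleton ℝ ℍ[ℝ] ℍ[ℝ] 0 ((Algebra.linearMap ℝ ℍ[ℝ]).comp (coord i))

/-- `dxⁱ ∧ dxʲ ∧ dxᵏ`. -/
def w3 (i j k : Fin 4) : QForm 3 := wedge (wedge (dx i) (dx j)) (dx k)

/-- The volume form `v = dx¹∧dx²∧dx³∧dx⁴`. -/
def vol : QForm 4 := wedge (wedge (wedge (dx 0) (dx 1)) (dx 2)) (dx 3)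

/-- The differential `df(x)` of `f : ℍ → ℍ` at `x`, as a quaternion-valued 1-form. -/
def dform (f : ℍ[ℝ] → ℍ[ℝ]) (x : ℍ[ℝ]) : QForm 1 :=
  AlternatingMap.ofSubsingleton ℝ ℍ[ℝ] ℍ[ℝ] 0 (fderiv ℝ f x).toLinearMap

/-- The 3-form `Dq`. -/
def Dq : QForm 3 :=
  qsmul (e 0) (w3 1 2 3) - qsmul (e 1) (w3 0 2 3) + qsmul (e 2) (w3 0 1 3) - qsmul (e 3) (w3 0 1 2)

/-- The constant real-valued 3-form
`D₁q = dx²∧dx³∧dx⁴ + ∑_{2≤i<j≤4} (−1)^{i+j}·dx¹∧dxⁱ∧dxʲ`. -/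
def D1q : QForm 3 :=
  w3 1 2 3 +
    (((-1 : ℝ) ^ (2 + 3)) • w3 0 1 2 +
     ((-1 : ℝ) ^ (2 + 4)) • w3 0 1 3 +
     ((-1 : ℝ) ^ (3 + 4)) • w3 0 2 3)

/-! The values of `D₁q` are real, hence central in `ℍ`, so they commute with the values of `df(x)`;
for forms with commuting values the wedge product is graded commutative, and `3 · 1` is odd.
A 4-form is determined by its value on `(e₁, e₂, e₃, e₄)`, and expanding `df(x) ∧ D₁q` along the
slot of `df(x)` gives `∑ᵢ ± ∂f/∂xᵢ · D₁q(the other three eᵢ)`: the signs `(−1)^{i+j}` in `D₁q`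
cancel the signs of this expansion, so every partial derivative enters with the same sign. -/

theorem AlternatingMap.ext_basis {R M N ι : Type*} [CommRing R] [AddCommGroup M] [Module R M]
    [AddCommGroup N] [Module R N] [Fintype ι] [DecidableEq ι] {f g : M [⋀^ι]→ₗ[R] N}
    (b : Module.Basis ι R M) (h : f b = g b) : f = g := by
  refine b.ext_alternating fun v hv => ?_
  let σ := Equiv.ofBijective v (Finite.injective_iff_bijective.mp hv)
  change f (b ∘ σ) = g (b ∘ σ)
  rw [f.map_perm, g.map_perm, h]

theorem finAddFlip_eq_finCongr_trans_finRotate_symm (n : ℕ) :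
    (finAddFlip : Fin (1 + n) ≃ Fin (n + 1)) =
      (finCongr (Nat.add_comm 1 n)).trans (finRotate (n + 1)).symm := by
  refine Equiv.ext fun i => ?_
  rw [Equiv.trans_apply, Equiv.eq_symm_apply, finRotate_succ]
  refine Fin.addCases (fun a => ?_) (fun b => ?_) i <;> simp

theorem wedge_apply {m n : ℕ} (α : QForm m) (β : QForm n) (v : Fin (m + n) → ℍ[ℝ]) :
    wedge α β v = ((m.factorial * n.factorial : ℕ) : ℝ)⁻¹ •
      ∑ τ : Equiv.Perm (Fin (m + n)), Equiv.Perm.sign τ •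
        (α (fun i => v (τ (Fin.castAdd n i))) * β (fun i => v (τ (Fin.natAdd m i)))) := by
  have h := congr(LinearMap.mul' ℝ ℍ[ℝ] ($(MultilinearMap.domCoprod_alternization_eq α β)
    (v ∘ finSumFinEquiv)))
  simp only [Fintype.card_fin, AlternatingMap.smul_apply, map_nsmul] at h
  rw [eq_inv_smul_iff₀ (by positivity), Nat.cast_smul_eq_nsmul]
  change _ • LinearMap.mul' ℝ ℍ[ℝ] (α.domCoprod β (v ∘ finSumFinEquiv)) = _
  rw [← h, MultilinearMap.alternatization_apply, map_sum,
    ← (Equiv.permCongr finSumFinEquiv.symm).sum_comp]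
  refine Finset.sum_congr rfl fun τ _ => ?_
  simp [Equiv.permCongr_apply]

theorem wedge_domDomCongr_finAddFlip {m n : ℕ} (α : QForm m) (β : QForm n)
    (hc : ∀ u w, α u * β w = β w * α u) :
    (wedge β α).domDomCongr finAddFlip = wedge α β := by
  refine AlternatingMap.ext fun v => ?_
  rw [AlternatingMap.domDomCongr_apply, wedge_apply, wedge_apply,
    mul_comm n.factorial, ← (Equiv.permCongr (finAddFlip (m := n) (n := m)).symm).sum_comp]
  congr 1
  refine Finset.sum_congr rfl fun τ _ => ?_
  simp [Equiv.permCongr_apply, finAddFlip_apply_castAdd, finAddFlip_apply_natAdd, hc]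

theorem wedge_mem {m n : ℕ} {S : Subalgebra ℝ ℍ[ℝ]} {α : QForm m} {β : QForm n}
    (hα : ∀ u, α u ∈ S) (hβ : ∀ w, β w ∈ S) (v : Fin (m + n) → ℍ[ℝ]) : wedge α β v ∈ S := by
  rw [wedge_apply]
  refine S.smul_mem (S.sum_mem fun τ _ => ?_) _
  rw [Units.smul_def]
  exact S.zsmul_mem (S.mul_mem (hα _) (hβ _)) _

theorem wedge_one_left_apply {n : ℕ} (β : QForm 1) (δ : QForm n) (v : Fin (n + 1) → ℍ[ℝ]) :
    (wedge β δ).domDomCongr (finCongr (Nat.add_comm 1 n)) v =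
      ∑ p, Equiv.Perm.sign (Equiv.swap 0 p) •
        (β (fun _ => v p) * δ (fun i => v (Equiv.swap 0 p i.succ))) := by
  have hfirst (i : Fin 1) : Fin.cast (Nat.add_comm 1 n) (Fin.castAdd n i) = 0 := by
    ext; simp [Subsingleton.elim i 0]
  have hrest (i : Fin n) : Fin.cast (Nat.add_comm 1 n) (Fin.natAdd 1 i) = i.succ := by
    ext; simp
  have hterm (p : Fin (n + 1)) (σ : Equiv.Perm (Fin n)) :
      Equiv.Perm.sign (Equiv.Perm.decomposeFin.symm (p, σ)) •
        (β (fun i => v (Equiv.Perm.decomposeFin.symm (p, σ) (Fin.cast (Nat.add_comm 1 n)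
          (Fin.castAdd n i)))) *
        δ (fun i => v (Equiv.Perm.decomposeFin.symm (p, σ) (Fin.cast (Nat.add_comm 1 n)
          (Fin.natAdd 1 i))))) =
      Equiv.Perm.sign (Equiv.swap 0 p) •
        (β (fun _ => v p) * δ (fun i => v (Equiv.swap 0 p i.succ))) := by
    have hδ : (fun i => v (Equiv.Perm.decomposeFin.symm (p, σ) i.succ)) =
        (fun i => v (Equiv.swap 0 p i.succ)) ∘ σ := by
      funext i
      simp [Equiv.Perm.decomposeFin_symm_apply_succ]
    simp only [hfirst, hrest, Equiv.Perm.decomposeFin_symm_apply_zero, hδ,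
      AlternatingMap.map_perm, Equiv.Perm.decomposeFin.symm_sign, Equiv.Perm.sign_swap',
      mul_smul_comm, smul_smul, mul_assoc, Int.units_mul_self, mul_one, eq_comm (a := p)]
  rw [AlternatingMap.domDomCongr_apply, wedge_apply,
    ← (Equiv.permCongr (finCongr (Nat.add_comm 1 n)).symm).sum_comp,
    ← Equiv.Perm.decomposeFin.symm.sum_comp, Fintype.sum_prod_type]
  simp only [Equiv.permCongr_apply, Equiv.Perm.sign_permCongr, Function.comp_apply, finCongr_symm,
    finCongr_apply, Fin.cast_cast, Fin.cast_eq_self, hterm]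
  simp only [Finset.sum_const, Finset.card_univ, Fintype.card_perm, Fintype.card_fin,
    Nat.factorial_one, one_mul, Finset.smul_sum, ← Nat.cast_smul_eq_nsmul ℝ, smul_smul,
    inv_mul_cancel₀ (Nat.cast_ne_zero.2 n.factorial_ne_zero : (n.factorial : ℝ) ≠ 0), one_smul]

theorem wedge_one_comm {n : ℕ} (δ : QForm n) (β : QForm 1) (hc : ∀ u w, δ u * β w = β w * δ u) :
    wedge δ β = ((-1 : ℤˣ) ^ n) • (wedge β δ).domDomCongr (finCongr (Nat.add_comm 1 n)) := by
  refine AlternatingMap.ext fun v => ?_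
  rw [← wedge_domDomCongr_finAddFlip δ β hc, finAddFlip_eq_finCongr_trans_finRotate_symm,
    AlternatingMap.domDomCongr_trans, AlternatingMap.domDomCongr_apply, AlternatingMap.map_perm,
    Equiv.Perm.sign_symm, sign_finRotate, Nat.add_sub_cancel, AlternatingMap.smul_apply]

theorem wedge_one_right_apply {n : ℕ} (δ : QForm n) (β : QForm 1)
    (hc : ∀ u w, δ u * β w = β w * δ u) (v : Fin (n + 1) → ℍ[ℝ]) :
    wedge δ β v = ((-1 : ℤˣ) ^ n) • ∑ p, Equiv.Perm.sign (Equiv.swap 0 p) •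
        (β (fun _ => v p) * δ (fun i => v (Equiv.swap 0 p i.succ))) := by
  rw [wedge_one_comm δ β hc, AlternatingMap.smul_apply, wedge_one_left_apply]

theorem coord_e (i j : Fin 4) : coord i (e j) = if i = j then 1 else 0 := by
  fin_cases i <;> fin_cases j <;> rfl

theorem dx_apply (i : Fin 4) (u : Fin 1 → ℍ[ℝ]) : dx i u = algebraMap ℝ ℍ[ℝ] (coord i (u 0)) :=
  rfl

theorem dx_mem_center (i : Fin 4) (u : Fin 1 → ℍ[ℝ]) : dx i u ∈ Subalgebra.center ℝ ℍ[ℝ] :=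
  Subalgebra.algebraMap_mem _ _

theorem w3_mem_center (i j k : Fin 4) (u : Fin 3 → ℍ[ℝ]) : w3 i j k u ∈ Subalgebra.center ℝ ℍ[ℝ] :=
  wedge_mem (wedge_mem (dx_mem_center i) (dx_mem_center j)) (dx_mem_center k) u

theorem D1q_mem_center (u : Fin 3 → ℍ[ℝ]) : D1q u ∈ Subalgebra.center ℝ ℍ[ℝ] := by
  simp only [D1q, AlternatingMap.add_apply, AlternatingMap.smul_apply]
  exact add_mem (w3_mem_center 1 2 3 u) (add_mem (add_mem (Subalgebra.smul_mem _
    (w3_mem_center 0 1 2 u) _) (Subalgebra.smul_mem _ (w3_mem_center 0 1 3 u) _))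
    (Subalgebra.smul_mem _ (w3_mem_center 0 2 3 u) _))

theorem commute_of_mem_center {m n : ℕ} {α : QForm m} (β : QForm n)
    (hα : ∀ u, α u ∈ Subalgebra.center ℝ ℍ[ℝ]) (u : Fin m → ℍ[ℝ]) (w : Fin n → ℍ[ℝ]) :
    α u * β w = β w * α u :=
  (Subalgebra.mem_center_iff.mp (hα u) (β w)).symm

theorem w3_apply (i j k : Fin 4) (v : Fin 3 → ℍ[ℝ]) :
    w3 i j k v = algebraMap ℝ ℍ[ℝ] (Matrix.of fun a b => coord (![i, j, k] a) (v b)).det := by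
  have hij := commute_of_mem_center (dx j) (dx_mem_center i)
  have hk := commute_of_mem_center (dx k) (wedge_mem (dx_mem_center i) (dx_mem_center j))
  rw [w3, wedge_one_right_apply _ _ hk]
  simp [wedge_one_right_apply _ _ hij, Fin.sum_univ_succ, dx_apply, Matrix.det_fin_three,
    Equiv.swap_apply_def]
  norm_cast
  congr 1
  ring

theorem basisOneIJK_eq_e :
    ⇑(QuaternionAlgebra.basisOneIJK (-1 : ℝ) 0 (-1) : Module.Basis (Fin 4) ℝ ℍ[ℝ]) = e := by
  funext i
  fin_cases i <;> ext <;> simp [QuaternionAlgebra.basisOneIJK, e]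

theorem QForm.ext_of_apply_e {X Y : QForm 4} (h : X e = Y e) : X = Y :=
  AlternatingMap.ext_basis (QuaternionAlgebra.basisOneIJK (-1 : ℝ) 0 (-1))
    (by convert h <;> exact basisOneIJK_eq_e)

theorem vol_e : vol e = 1 := by
  have hc := commute_of_mem_center (dx 3) (w3_mem_center 0 1 2)
  change wedge (w3 0 1 2) (dx 3) e = 1
  simp [wedge_one_right_apply _ _ hc, dx_apply, w3_apply, coord_e, Matrix.det_fin_three,
    Equiv.swap_apply_def, pow_succ]

theorem D1q_wedge_df_general (f : ℍ[ℝ] → ℍ[ℝ]) (x : ℍ[ℝ]) :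
    wedge D1q (dform f x) = -wedge (dform f x) D1q ∧
    wedge D1q (dform f x) =
      qsmul (-(fderiv ℝ f x (e 0) + fderiv ℝ f x (e 1) +
               fderiv ℝ f x (e 2) + fderiv ℝ f x (e 3))) vol := by
  have hc := commute_of_mem_center (dform f x) D1q_mem_center
  refine ⟨?_, QForm.ext_of_apply_e ?_⟩
  · rw [wedge_one_comm D1q _ hc]
    simp [pow_succ]
  · rw [wedge_one_right_apply _ _ hc]
    simp [pow_succ, qsmul, vol_e, Fin.sum_univ_succ, dform, D1q, w3_apply, coord_e,
      Matrix.det_fin_three, Equiv.swap_apply_def]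
    abel

/-- `D₁q ∧ df(x) = −df(x) ∧ D₁q
= −[∂f/∂x₁ + ∂f/∂x₂ + ∂f/∂x₃ + ∂f/∂x₄](x)·v`. -/
theorem D1q_wedge_df (U : Set ℍ[ℝ]) (hU : IsOpen U) (f : ℍ[ℝ] → ℍ[ℝ])
    (hf : ContDiffOn ℝ 1 f U) (x : ℍ[ℝ]) (hx : x ∈ U) :
    wedge D1q (dform f x) = -wedge (dform f x) D1q ∧
    wedge D1q (dform f x) =
      qsmul (-(fderiv ℝ f x (e 0) + fderiv ℝ f x (e 1) +
               fderiv ℝ f x (e 2) + fderiv ℝ f x (e 3))) vol :=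
  D1q_wedge_df_general f x
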